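/- Let Z be a commutative ring with unity, let g, ω ∈ J(Z), and let n ≥ 1. If ω is a root of order n of g (that is, ω^[n] = g), then the multiplicity of ω is less than or equal to the multiplicity of g; equivalently, the order of the power series ω − x is less than or equal to the order of the power series g − x (with the convention that the zero power series has order ∞). -/

import Mathlib

open PowerSeries Finset

/-- Composition `f ∘ g` of formal power series (substitution of `g` into `f`).
This coefficientwise formula agrees with the usual substitution whenever the
constant coefficient of `g` is zero, since then `g ^ j` has order at least `j`. -/
noncomputable def psComp {Z : Type*} [CommRing Z] (f g : Z⟦X⟧) : Z⟦X⟧ :=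
  PowerSeries.mk fun n => ∑ j ∈ Finset.range (n + 1), coeff j f * coeff n (g ^ j)

/-- The `m`-th compositional iterate: `ω^[0] = X` and `ω^[m+1] = ω ∘ ω^[m]`. -/
noncomputable def psIter {Z : Type*} [CommRing Z] (ω : Z⟦X⟧) : ℕ → Z⟦X⟧
  | 0 => PowerSeries.X
  | m + 1 => psComp ω (psIter ω m)

/- Since `ω^[m+1] - X = (ω - X) ∘ ω^[m] + (ω^[m] - X)` and substituting into a series never lowers
its order, induction on `m` gives `order (ω - X) ≤ order (ω^[m] - X)`. -/
section Composition

variable {Z : Type*} [CommRing Z]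

lemma psComp_sub_left (f f' h : Z⟦X⟧) :
    psComp (f - f') h = psComp f h - psComp f' h := by
  ext n
  simp only [psComp, coeff_mk, map_sub, sub_mul, sum_sub_distrib]

lemma psComp_X_left {h : Z⟦X⟧} (hh : constantCoeff h = 0) : psComp X h = h := by
  ext n
  rcases n with _ | n
  · simp [psComp, hh]
  · simp [psComp, coeff_X]

lemma order_le_order_psComp (f h : Z⟦X⟧) : f.order ≤ (psComp f h).order := by
  refine le_order _ _ fun n hn => ?_
  rw [psComp, coeff_mk]
  refine sum_eq_zero fun j hj => ?_
  have hjn : (j : ℕ∞) < f.order := lt_of_le_of_lt (by exact_mod_cast mem_range_succ_iff.mp hj) hn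
  rw [coeff_of_lt_order j hjn, zero_mul]

lemma constantCoeff_psComp (f h : Z⟦X⟧) : constantCoeff (psComp f h) = constantCoeff f := by
  rw [← coeff_zero_eq_constantCoeff_apply, ← coeff_zero_eq_constantCoeff_apply]
  simp [psComp]

lemma constantCoeff_psIter {ω : Z⟦X⟧} (hω0 : constantCoeff ω = 0) (m : ℕ) :
    constantCoeff (psIter ω m) = 0 := by
  cases m with
  | zero => simp [psIter]
  | succ m => rw [psIter, constantCoeff_psComp, hω0]

lemma order_sub_X_le_order_psIter_sub_X {ω : Z⟦X⟧} (hω0 : constantCoeff ω = 0) (m : ℕ) :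
    (ω - X).order ≤ (psIter ω m - X).order := by
  induction m with
  | zero => simp [psIter]
  | succ m ih =>
    have hsplit : psIter ω (m + 1) - X = psComp (ω - X) (psIter ω m) + (psIter ω m - X) := by
      rw [psComp_sub_left, psComp_X_left (constantCoeff_psIter hω0 m), psIter]
      ring
    rw [hsplit]
    exact (le_min (order_le_order_psComp _ _) ih).trans (min_order_le_order_add _ _)

end Composition

theorem multiplicity_root_le_general {Z : Type*} [CommRing Z] (g ω : Z⟦X⟧)
    (hω0 : constantCoeff ω = 0)
    (n : ℕ) (hroot : psIter ω n = g) :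
    (ω - PowerSeries.X).order ≤ (g - PowerSeries.X).order :=
  hroot ▸ order_sub_X_le_order_psIter_sub_X hω0 n

/-- if `ω^[n] = g` in `𝒥(Z)` (`n ≥ 1`), then the multiplicity of `ω` is at most
the multiplicity of `g`, i.e. `order (ω − X) ≤ order (g − X)`. -/
theorem multiplicity_root_le {Z : Type*} [CommRing Z] (g ω : Z⟦X⟧)
    (hg0 : constantCoeff g = 0) (hg1 : coeff 1 g = 1)
    (hω0 : constantCoeff ω = 0) (hω1 : coeff 1 ω = 1)
    (n : ℕ) (hn : 1 ≤ n) (hroot : psIter ω n = g) :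
    (ω - PowerSeries.X).order ≤ (g - PowerSeries.X).order :=
  multiplicity_root_le_general g ω hω0 n hroot
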